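/- (Tensor–matrix spectral norm connection.) Let T ∈ ℝ^{n₁×n₂×n₃} be a 3-way tensor and for j = 1,2,3 let r_j = rank(M_j(T)) be its multilinear ranks. Then for each j ∈ {1,2,3}, the matrix operator norm of the mode-j matricization satisfies ‖M_j(T)‖ ≤ ‖T‖ · √( (r₁ r₂ r₃ / r_j) / max_{j' ≠ j} r_{j'} ), where ‖T‖ is the tensor spectral norm. In particular, ‖M₁(T)‖ ≤ ‖T‖ √(min(r₂, r₃)). -/

import Mathlib

/-!
Contract `T` against a unit vector `u` in the first mode to get the matrix `A = ∑ᵢ uᵢ Tᵢ`.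
Every value `wᵀ A z` of its bilinear form is a value of the trilinear form of `T`, so
`‖A‖ ≤ ‖T‖`, and `A` factors through both `M₂(T)` and `M₃(T)`, so `rank A ≤ min(r₂, r₃)`.
Summing the eigenvalues of `AᵀA` gives `‖A‖_F² ≤ rank A · ‖A‖² ≤ min(r₂, r₃) ‖T‖²`, and
`uᵀ M₁(T) v = ⟨A, v⟩_F ≤ ‖A‖_F` for every unit `v`. The other modes follow by permuting the
indices of `T`, and `(r₁r₂r₃ / r_j) / max_{j' ≠ j} r_{j'}` is the minimum of the two other ranks.
-/

/-- The spectral norm of a 3-way tensor. -/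
noncomputable def tensorNorm {n₁ n₂ n₃ : ℕ} (T : Fin n₁ → Fin n₂ → Fin n₃ → ℝ) : ℝ :=
  sSup {x | ∃ (u₁ : Fin n₁ → ℝ) (u₂ : Fin n₂ → ℝ) (u₃ : Fin n₃ → ℝ),
    (∑ i, (u₁ i) ^ 2 ≤ 1) ∧ (∑ i, (u₂ i) ^ 2 ≤ 1) ∧ (∑ i, (u₃ i) ^ 2 ≤ 1) ∧
    x = ∑ i₁, ∑ i₂, ∑ i₃, T i₁ i₂ i₃ * u₁ i₁ * u₂ i₂ * u₃ i₃}

/-- The matrix operator (spectral) norm, expressed as a bilinear supremum. -/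
noncomputable def matOpNorm {α β : Type*} [Fintype α] [Fintype β]
    (M : α → β → ℝ) : ℝ :=
  sSup {x | ∃ (u : α → ℝ) (v : β → ℝ),
    (∑ a, (u a) ^ 2 ≤ 1) ∧ (∑ b, (v b) ^ 2 ≤ 1) ∧
    x = ∑ a, ∑ b, u a * M a b * v b}

open Matrix Finset

theorem abs_le_one_of_sum_sq_le_one {ι : Type*} [Fintype ι] {u : ι → ℝ}
    (hu : ∑ i, u i ^ 2 ≤ 1) (i : ι) : |u i| ≤ 1 :=
  (sq_le_one_iff_abs_le_one _).1 <|
    (single_le_sum (fun j _ => sq_nonneg (u j)) (mem_univ i)).trans hu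

theorem mul_div_max_eq_min {a b : ℝ} (ha : 0 ≤ a) (hb : 0 ≤ b) : a * b / max a b = min a b := by
  rcases (le_max_of_le_left ha).eq_or_lt with h | h
  · rw [← h, div_zero, eq_comm, ← le_antisymm (h ▸ min_le_max) (le_min ha hb)]
  · rw [← min_mul_max, mul_div_cancel_right₀ _ h.ne']

namespace Matrix

variable {m n K : Type*} [Fintype n]

theorem dotProduct_self_eq_sum_sq (w : n → ℝ) : w ⬝ᵥ w = ∑ i, w i ^ 2 := by
  simp only [dotProduct, sq]

theorem rank_eq_zero_iff [Field K] {A : Matrix m n K} : A.rank = 0 ↔ A = 0 := by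
  classical
  rw [rank, Submodule.finrank_eq_zero, LinearMap.range_eq_bot, ← toLin'_apply',
    LinearEquiv.map_eq_zero_iff]

theorem rank_ne_zero_of_apply_ne_zero [Field K] {A : Matrix m n K} {i : m} {j : n}
    (h : A i j ≠ 0) : A.rank ≠ 0 :=
  fun h0 => h (by rw [rank_eq_zero_iff.1 h0, zero_apply])

theorem dotProduct_self_le_sq_of_forall_dotProduct_le [Fintype m] {y : m → ℝ} {B : ℝ}
    (h : ∀ w : m → ℝ, w ⬝ᵥ w ≤ 1 → w ⬝ᵥ y ≤ B) : y ⬝ᵥ y ≤ B ^ 2 := by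
  rcases (dotProduct_self_star_nonneg y).eq_or_lt with hy | hy <;> rw [star_trivial] at hy
  · rw [← hy]; positivity
  set s := √(y ⬝ᵥ y)
  have hs : 0 < s := Real.sqrt_pos.2 hy
  have hss : s * s = y ⬝ᵥ y := Real.mul_self_sqrt hy.le
  have hunit : s⁻¹ • y ⬝ᵥ s⁻¹ • y = 1 := by
    rw [smul_dotProduct, dotProduct_smul, ← hss, smul_eq_mul, smul_eq_mul]
    field_simp
  have hsB : s ≤ B := by
    simpa only [smul_dotProduct, ← hss, smul_eq_mul, inv_mul_cancel_left₀ hs.ne']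
      using h _ hunit.le
  nlinarith

theorem _root_.OrthonormalBasis.dotProduct_self_eq_one {ι : Type*} [Fintype ι]
    (b : OrthonormalBasis ι ℝ (EuclideanSpace ℝ n)) (i : ι) : ⇑(b i) ⬝ᵥ ⇑(b i) = 1 := by
  have h := real_inner_self_eq_norm_sq (b i)
  rwa [b.orthonormal.1 i, one_pow, EuclideanSpace.inner_eq_star_dotProduct, star_trivial] at h

theorem eigenvalues_conjTranspose_mul_self_le [Fintype m] [DecidableEq n] (A : Matrix m n ℝ)
    {c : ℝ} (h : ∀ z : n → ℝ, z ⬝ᵥ z ≤ 1 → A *ᵥ z ⬝ᵥ A *ᵥ z ≤ c) (i : n) :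
    (isHermitian_conjTranspose_mul_self A).eigenvalues i ≤ c := by
  have hv := (isHermitian_conjTranspose_mul_self A).eigenvectorBasis.dotProduct_self_eq_one i
  rw [IsHermitian.eigenvalues_eq, ← mulVec_mulVec, dotProduct_mulVec, vecMul_conjTranspose]
  simpa using h _ hv.le

theorem IsHermitian.trace_le_rank_mul [DecidableEq n] {G : Matrix n n ℝ} (hG : G.IsHermitian)
    {c : ℝ} (h : ∀ i, hG.eigenvalues i ≤ c) : G.trace ≤ G.rank * c := by
  rw [hG.trace_eq_sum_eigenvalues, hG.rank_eq_card_non_zero_eigs, Fintype.card_subtype,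
    ← sum_filter_ne_zero]
  simpa using sum_le_card_nsmul _ _ c fun i _ => h i

theorem trace_conjTranspose_mul_self_eq_sum_sq [Fintype m] (A : Matrix m n ℝ) :
    (Aᴴ * A).trace = ∑ i, ∑ j, A i j ^ 2 := by
  simp only [trace, diag_apply, mul_apply, conjTranspose_apply, star_trivial, sq]
  exact sum_comm

theorem sum_sq_le_rank_mul [Fintype m] (A : Matrix m n ℝ) {c : ℝ}
    (h : ∀ z : n → ℝ, z ⬝ᵥ z ≤ 1 → A *ᵥ z ⬝ᵥ A *ᵥ z ≤ c) :
    ∑ i, ∑ j, A i j ^ 2 ≤ A.rank * c := by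
  classical
  rw [← trace_conjTranspose_mul_self_eq_sum_sq, ← rank_conjTranspose_mul_self]
  exact IsHermitian.trace_le_rank_mul _ (eigenvalues_conjTranspose_mul_self_le A h)

end Matrix

section Matricization

variable {α β γ : Type*}

def matricization₁ (T : α → β → γ → ℝ) : Matrix α (β × γ) ℝ := of fun i p => T i p.1 p.2

def matricization₂ (T : α → β → γ → ℝ) : Matrix β (α × γ) ℝ := of fun j p => T p.1 j p.2

def matricization₃ (T : α → β → γ → ℝ) : Matrix γ (α × β) ℝ := of fun k p => T p.1 p.2 k

variable [Fintype α]

def contractFirst (T : α → β → γ → ℝ) (u : α → ℝ) : Matrix β γ ℝ :=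
  of fun j k => ∑ i, u i * T i j k

variable [Fintype γ]

theorem contractFirst_eq_matricization₂_mul [DecidableEq γ] (T : α → β → γ → ℝ) (u : α → ℝ) :
    contractFirst T u =
      matricization₂ T * of fun (p : α × γ) k => if p.2 = k then u p.1 else 0 := by
  ext j k
  simp only [contractFirst, matricization₂, mul_apply, of_apply, mul_ite, mul_zero,
    Fintype.sum_prod_type, sum_ite_eq', mem_univ, if_true, mul_comm]

theorem rank_contractFirst_le_rank_matricization₂ (T : α → β → γ → ℝ) (u : α → ℝ) :
    (contractFirst T u).rank ≤ (matricization₂ T).rank := by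
  classical
  rw [contractFirst_eq_matricization₂_mul]
  exact rank_mul_le_left _ _

theorem rank_contractFirst_le_rank_matricization₃ [Fintype β] (T : α → β → γ → ℝ) (u : α → ℝ) :
    (contractFirst T u).rank ≤ (matricization₃ T).rank := by
  rw [← rank_transpose]
  exact rank_contractFirst_le_rank_matricization₂ (fun i k j => T i j k) u

variable [Fintype β]

theorem dotProduct_contractFirst_mulVec (T : α → β → γ → ℝ) (u : α → ℝ) (w : β → ℝ)
    (z : γ → ℝ) :
    w ⬝ᵥ contractFirst T u *ᵥ z = ∑ i, ∑ j, ∑ k, T i j k * u i * w j * z k := by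
  simp only [dotProduct, mulVec, contractFirst, of_apply, mul_sum, sum_mul]
  rw [eq_comm, sum_comm]
  refine sum_congr rfl fun j _ => ?_
  rw [sum_comm]
  exact sum_congr rfl fun k _ => sum_congr rfl fun i _ => by ring

theorem sum_mul_matricization₁_mul (T : α → β → γ → ℝ) (u : α → ℝ) (v : β × γ → ℝ) :
    ∑ i, ∑ p, u i * matricization₁ T i p * v p = ∑ p, contractFirst T u p.1 p.2 * v p := by
  rw [sum_comm]
  simp only [matricization₁, contractFirst, of_apply, sum_mul]

end Matricization

section TensorNorm

variable {n₁ n₂ n₃ : ℕ}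

theorem le_tensorNorm (T : Fin n₁ → Fin n₂ → Fin n₃ → ℝ) {u₁ : Fin n₁ → ℝ} {u₂ : Fin n₂ → ℝ}
    {u₃ : Fin n₃ → ℝ} (h₁ : ∑ i, u₁ i ^ 2 ≤ 1) (h₂ : ∑ i, u₂ i ^ 2 ≤ 1)
    (h₃ : ∑ i, u₃ i ^ 2 ≤ 1) :
    ∑ i₁, ∑ i₂, ∑ i₃, T i₁ i₂ i₃ * u₁ i₁ * u₂ i₂ * u₃ i₃ ≤ tensorNorm T := by
  refine le_csSup ⟨∑ i₁, ∑ i₂, ∑ i₃, |T i₁ i₂ i₃|, ?_⟩ ⟨u₁, u₂, u₃, h₁, h₂, h₃, rfl⟩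
  rintro _ ⟨v₁, v₂, v₃, g₁, g₂, g₃, rfl⟩
  gcongr with i₁ _ i₂ _ i₃ _
  calc T i₁ i₂ i₃ * v₁ i₁ * v₂ i₂ * v₃ i₃
      ≤ |T i₁ i₂ i₃| * |v₁ i₁| * |v₂ i₂| * |v₃ i₃| :=
        (le_abs_self _).trans_eq (by simp only [abs_mul])
    _ ≤ |T i₁ i₂ i₃| * 1 * 1 * 1 := by
      gcongr
      exacts [abs_le_one_of_sum_sq_le_one g₁ i₁, abs_le_one_of_sum_sq_le_one g₂ i₂,
        abs_le_one_of_sum_sq_le_one g₃ i₃]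
    _ = |T i₁ i₂ i₃| := by ring

theorem tensorNorm_nonneg (T : Fin n₁ → Fin n₂ → Fin n₃ → ℝ) : 0 ≤ tensorNorm T := by
  simpa using le_tensorNorm T (u₁ := 0) (u₂ := 0) (u₃ := 0) (by simp) (by simp) (by simp)

theorem tensorNorm_le {T : Fin n₁ → Fin n₂ → Fin n₃ → ℝ} {C : ℝ} (hC : 0 ≤ C)
    (h : ∀ (u₁ : Fin n₁ → ℝ) (u₂ : Fin n₂ → ℝ) (u₃ : Fin n₃ → ℝ), ∑ i, u₁ i ^ 2 ≤ 1 →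
      ∑ i, u₂ i ^ 2 ≤ 1 → ∑ i, u₃ i ^ 2 ≤ 1 →
      ∑ i₁, ∑ i₂, ∑ i₃, T i₁ i₂ i₃ * u₁ i₁ * u₂ i₂ * u₃ i₃ ≤ C) :
    tensorNorm T ≤ C :=
  Real.sSup_le (by rintro _ ⟨u₁, u₂, u₃, h₁, h₂, h₃, rfl⟩; exact h u₁ u₂ u₃ h₁ h₂ h₃) hC

theorem tensorNorm_swap_le (T : Fin n₁ → Fin n₂ → Fin n₃ → ℝ) :
    tensorNorm (fun j i k => T i j k) ≤ tensorNorm T := by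
  refine tensorNorm_le (tensorNorm_nonneg T) fun u₁ u₂ u₃ h₁ h₂ h₃ => ?_
  refine le_of_eq_of_le ?_ (le_tensorNorm T h₂ h₁ h₃)
  rw [sum_comm]
  exact sum_congr rfl fun i _ => sum_congr rfl fun j _ => sum_congr rfl fun k _ => by ring

theorem tensorNorm_rotate_le (T : Fin n₁ → Fin n₂ → Fin n₃ → ℝ) :
    tensorNorm (fun k i j => T i j k) ≤ tensorNorm T := by
  refine tensorNorm_le (tensorNorm_nonneg T) fun u₁ u₂ u₃ h₁ h₂ h₃ => ?_
  refine le_of_eq_of_le ?_ (le_tensorNorm T h₂ h₃ h₁)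
  rw [sum_comm]
  refine sum_congr rfl fun i _ => ?_
  rw [sum_comm]
  exact sum_congr rfl fun j _ => sum_congr rfl fun k _ => by ring

end TensorNorm

section MatricizationNorm

variable {n₁ n₂ n₃ : ℕ}

theorem matOpNorm_matricization₁_le (T : Fin n₁ → Fin n₂ → Fin n₃ → ℝ) :
    matOpNorm (matricization₁ T) ≤
      tensorNorm T * √(min ((matricization₂ T).rank : ℝ) (matricization₃ T).rank) := by
  set B := tensorNorm T
  have hB : 0 ≤ B := tensorNorm_nonneg T
  refine Real.sSup_le ?_ (by positivity)
  rintro _ ⟨u, v, hu, hv, rfl⟩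
  set A := contractFirst T u
  have hA : ∀ z : Fin n₃ → ℝ, z ⬝ᵥ z ≤ 1 → A *ᵥ z ⬝ᵥ A *ᵥ z ≤ B ^ 2 := fun z hz =>
    dotProduct_self_le_sq_of_forall_dotProduct_le fun w hw => by
      rw [dotProduct_self_eq_sum_sq] at hw hz
      rw [dotProduct_contractFirst_mulVec]
      exact le_tensorNorm T hu hw hz
  have hrank : (A.rank : ℝ) ≤ min ((matricization₂ T).rank : ℝ) (matricization₃ T).rank := by
    exact_mod_cast le_min (rank_contractFirst_le_rank_matricization₂ T u)
      (rank_contractFirst_le_rank_matricization₃ T u)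
  have hfrob : ∑ p : Fin n₂ × Fin n₃, A p.1 p.2 ^ 2 ≤
      min ((matricization₂ T).rank : ℝ) (matricization₃ T).rank * B ^ 2 := by
    rw [Fintype.sum_prod_type]
    exact (sum_sq_le_rank_mul A hA).trans (by gcongr)
  calc ∑ i, ∑ p, u i * matricization₁ T i p * v p
      = ∑ p, A p.1 p.2 * v p := sum_mul_matricization₁_mul T u v
    _ ≤ √(∑ p : Fin n₂ × Fin n₃, A p.1 p.2 ^ 2) * √(∑ p, v p ^ 2) :=
      Real.sum_mul_le_sqrt_mul_sqrt _ _ _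
    _ ≤ √(min ((matricization₂ T).rank : ℝ) (matricization₃ T).rank * B ^ 2) * 1 := by
      gcongr
      exact Real.sqrt_le_one.2 hv
    _ = B * √(min ((matricization₂ T).rank : ℝ) (matricization₃ T).rank) := by
      rw [mul_one, Real.sqrt_mul' _ (sq_nonneg B), Real.sqrt_sq hB, mul_comm]

theorem matOpNorm_matricization₂_le (T : Fin n₁ → Fin n₂ → Fin n₃ → ℝ) :
    matOpNorm (matricization₂ T) ≤
      tensorNorm T * √(min ((matricization₁ T).rank : ℝ) (matricization₃ T).rank) := by
  have h := matOpNorm_matricization₁_le (fun j i k => T i j k)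
  have h₂ : matricization₂ (fun j i k => T i j k) = matricization₁ T := rfl
  have h₃ : (matricization₃ fun j i k => T i j k).rank = (matricization₃ T).rank :=
    rank_submatrix (matricization₃ T) (Equiv.refl _) (Equiv.prodComm _ _)
  rw [h₂, h₃] at h
  exact h.trans (by gcongr; exact tensorNorm_swap_le T)

theorem matOpNorm_matricization₃_le (T : Fin n₁ → Fin n₂ → Fin n₃ → ℝ) :
    matOpNorm (matricization₃ T) ≤
      tensorNorm T * √(min ((matricization₁ T).rank : ℝ) (matricization₂ T).rank) := by
  have h := matOpNorm_matricization₁_le (fun k i j => T i j k)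
  have h₂ : (matricization₂ fun k i j => T i j k).rank = (matricization₁ T).rank :=
    rank_submatrix (matricization₁ T) (Equiv.refl _) (Equiv.prodComm _ _)
  have h₃ : (matricization₃ fun k i j => T i j k).rank = (matricization₂ T).rank :=
    rank_submatrix (matricization₂ T) (Equiv.refl _) (Equiv.prodComm _ _)
  rw [h₂, h₃] at h
  exact h.trans (by gcongr; exact tensorNorm_rotate_le T)

end MatricizationNorm

/-- **Tensor–matrix spectral norm connection** (Lemma 7 of the paper, from
Xia–Yuan): if `T` has multilinear ranks `(r₁,r₂,r₃)` then
`‖M_j(T)‖ ≤ ‖T‖ √((r₁r₂r₃/r_j)/max_{j'≠j} r_{j'})`; in particular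
`‖M₁(T)‖ ≤ ‖T‖ √(min(r₂,r₃))`. -/
theorem matricization_opnorm_le_tensorNorm
    (n₁ n₂ n₃ : ℕ) (T : Fin n₁ → Fin n₂ → Fin n₃ → ℝ)
    (r₁ r₂ r₃ : ℕ)
    (hr₁ : r₁ = (Matrix.of fun i (p : Fin n₂ × Fin n₃) => T i p.1 p.2).rank)
    (hr₂ : r₂ = (Matrix.of fun i (p : Fin n₁ × Fin n₃) => T p.1 i p.2).rank)
    (hr₃ : r₃ = (Matrix.of fun i (p : Fin n₁ × Fin n₂) => T p.1 p.2 i).rank) :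
    (matOpNorm (fun i (p : Fin n₂ × Fin n₃) => T i p.1 p.2)
      ≤ tensorNorm T *
          Real.sqrt ((((r₁ : ℝ) * r₂ * r₃) / r₁) / max (r₂ : ℝ) (r₃ : ℝ))) ∧
    (matOpNorm (fun i (p : Fin n₁ × Fin n₃) => T p.1 i p.2)
      ≤ tensorNorm T *
          Real.sqrt ((((r₁ : ℝ) * r₂ * r₃) / r₂) / max (r₁ : ℝ) (r₃ : ℝ))) ∧
    (matOpNorm (fun i (p : Fin n₁ × Fin n₂) => T p.1 p.2 i)
      ≤ tensorNorm T *
          Real.sqrt ((((r₁ : ℝ) * r₂ * r₃) / r₃) / max (r₁ : ℝ) (r₂ : ℝ))) ∧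
    (matOpNorm (fun i (p : Fin n₂ × Fin n₃) => T i p.1 p.2)
      ≤ tensorNorm T * Real.sqrt (min (r₂ : ℝ) (r₃ : ℝ))) := by
  obtain rfl : r₁ = (matricization₁ T).rank := hr₁
  obtain rfl : r₂ = (matricization₂ T).rank := hr₂
  obtain rfl : r₃ = (matricization₃ T).rank := hr₃
  have h₁ := matOpNorm_matricization₁_le T
  have h₂ := matOpNorm_matricization₂_le T
  have h₃ := matOpNorm_matricization₃_le T
  by_cases hT : ∃ a b c, T a b c ≠ 0
  · obtain ⟨a, b, c, habc⟩ := hT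
    have p₁ : ((matricization₁ T).rank : ℝ) ≠ 0 :=
      Nat.cast_ne_zero.2 (rank_ne_zero_of_apply_ne_zero (i := a) (j := (b, c)) habc)
    have p₂ : ((matricization₂ T).rank : ℝ) ≠ 0 :=
      Nat.cast_ne_zero.2 (rank_ne_zero_of_apply_ne_zero (i := b) (j := (a, c)) habc)
    have p₃ : ((matricization₃ T).rank : ℝ) ≠ 0 :=
      Nat.cast_ne_zero.2 (rank_ne_zero_of_apply_ne_zero (i := c) (j := (a, b)) habc)
    refine ⟨?_, ?_, ?_, h₁⟩
    · rwa [mul_assoc, mul_div_cancel_left₀ _ p₁,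
        mul_div_max_eq_min (Nat.cast_nonneg _) (Nat.cast_nonneg _)]
    · rwa [mul_right_comm, mul_div_cancel_right₀ _ p₂,
        mul_div_max_eq_min (Nat.cast_nonneg _) (Nat.cast_nonneg _)]
    · rwa [mul_div_cancel_right₀ _ p₃,
        mul_div_max_eq_min (Nat.cast_nonneg _) (Nat.cast_nonneg _)]
  · push Not at hT
    have z₁ : (matricization₁ T).rank = 0 := rank_eq_zero_iff.2 (by ext; apply hT)
    have z₂ : (matricization₂ T).rank = 0 := rank_eq_zero_iff.2 (by ext; apply hT)
    have z₃ : (matricization₃ T).rank = 0 := rank_eq_zero_iff.2 (by ext; apply hT)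
    simp only [z₁, z₂, z₃, Nat.cast_zero, mul_zero, zero_div, min_self] at h₁ h₂ h₃ ⊢
    exact ⟨h₁, h₂, h₃, h₁⟩
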